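/- Assume λ₂ = 0 and set a_n = k_n/k̂_{n-1}, b_n = k̂_n/k_{n-1}. Then a_{n+1} b_n = c_{n+1} c_n for all n ≥ 1. -/

import Mathlib

open Polynomial MeasureTheory Filter Topology

/-- The Freud inner product `⟨f,g⟩_F = ∫_ℝ f(x) g(x) e^{-x⁴} dx`. -/
noncomputable def innerF (f g : Polynomial ℝ) : ℝ :=
  ∫ x : ℝ, f.eval x * g.eval x * Real.exp (-x ^ 4)


/-- The Sobolev inner product
`⟨f,g⟩_S = ⟨f,g⟩_F + λ₁ f(0) g(0) + λ₂ f'(0) g'(0)`. -/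
noncomputable def innerS (l1 l2 : ℝ) (f g : Polynomial ℝ) : ℝ :=
  innerF f g + l1 * f.eval 0 * g.eval 0
    + l2 * (Polynomial.derivative f).eval 0 * (Polynomial.derivative g).eval 0

/-! The product telescopes: `a (n + 1) * b n = k (n + 1) / k (n - 1)` because `k̂ n > 0` cancels,
so only the Freud norms matter, and for them `k (n + 1) = c (n + 1) * k n`. That recurrence holds
for any bilinear form in which multiplication by `X` is self-adjoint: pair `X * P (n + 1)` with
`P n`; on one side the recurrence and orthogonality leave `c (n + 1) * k n`, on the other
`X * P n = P (n + 1) + (lower degree)` leaves `k (n + 1)`. -/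

theorem integrable_pow_mul_exp_neg_pow_four (m : ℕ) :
    Integrable fun x : ℝ => x ^ m * Real.exp (-x ^ 4) := by
  have hgauss : Integrable fun x : ℝ => Real.exp 1 * (x ^ m * Real.exp (-x ^ 2)) := by
    refine Integrable.const_mul ?_ _
    simpa only [Real.rpow_natCast, neg_mul, one_mul] using
      integrable_rpow_mul_exp_neg_mul_sq (b := 1) one_pos (s := m)
        (by linarith [m.cast_nonneg (α := ℝ)])
  refine hgauss.mono (by fun_prop) (ae_of_all _ fun x => ?_)
  have hexp : Real.exp (-x ^ 4) ≤ Real.exp 1 * Real.exp (-x ^ 2) := by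
    rw [← Real.exp_add, Real.exp_le_exp]
    nlinarith [sq_nonneg (x ^ 2 - 1)]
  simp only [norm_mul, Real.norm_eq_abs, Real.abs_exp, abs_pow]
  calc |x| ^ m * Real.exp (-x ^ 4) ≤ |x| ^ m * (Real.exp 1 * Real.exp (-x ^ 2)) := by gcongr
    _ = _ := by ring

theorem integrable_eval_mul_exp_neg_pow_four (f : ℝ[X]) :
    Integrable fun x : ℝ => f.eval x * Real.exp (-x ^ 4) := by
  induction f using Polynomial.induction_on' with
  | add p q hp hq =>
    simp only [eval_add, add_mul]
    exact hp.add hq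
  | monomial m a =>
    simpa only [eval_monomial, mul_assoc] using (integrable_pow_mul_exp_neg_pow_four m).const_mul a

theorem integrable_eval_mul_eval_mul_exp_neg_pow_four (f g : ℝ[X]) :
    Integrable fun x : ℝ => f.eval x * g.eval x * Real.exp (-x ^ 4) := by
  simpa only [eval_mul] using integrable_eval_mul_exp_neg_pow_four (f * g)

theorem innerF_comm (f g : ℝ[X]) : innerF f g = innerF g f := by
  simp only [innerF, mul_comm (f.eval _)]

theorem innerF_add_left (f g h : ℝ[X]) : innerF (f + g) h = innerF f h + innerF g h := by
  rw [innerF, innerF, innerF, ← integral_add (integrable_eval_mul_eval_mul_exp_neg_pow_four f h)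
    (integrable_eval_mul_eval_mul_exp_neg_pow_four g h)]
  simp only [eval_add, add_mul]

theorem innerF_smul_left (r : ℝ) (f g : ℝ[X]) : innerF (r • f) g = r * innerF f g := by
  rw [innerF, innerF, ← integral_const_mul]
  simp only [eval_smul, smul_eq_mul, mul_assoc]

noncomputable def freudForm : LinearMap.BilinForm ℝ ℝ[X] :=
  LinearMap.mk₂ ℝ innerF innerF_add_left innerF_smul_left
    (fun f g h => by simp only [innerF_comm f, innerF_add_left])
    (fun r f g => by simp only [innerF_comm f, innerF_smul_left, smul_eq_mul])

theorem freudForm_apply (f g : ℝ[X]) : freudForm f g = innerF f g := rfl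

theorem freudForm_X_mul (f g : ℝ[X]) : freudForm (X * f) g = freudForm f (X * g) := by
  simp only [freudForm_apply, innerF, eval_mul, eval_X, mul_left_comm (f.eval _), mul_assoc]

theorem innerF_self_pos {f : ℝ[X]} (hf : f ≠ 0) : 0 < innerF f f := by
  have hnonneg : 0 ≤ fun x : ℝ => f.eval x * f.eval x * Real.exp (-x ^ 4) :=
    fun x => mul_nonneg (mul_self_nonneg _) (Real.exp_pos _).le
  rw [innerF, integral_pos_iff_support_of_nonneg hnonneg
    (integrable_eval_mul_eval_mul_exp_neg_pow_four f f)]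
  have hsupport : Function.support (fun x : ℝ => f.eval x * f.eval x * Real.exp (-x ^ 4)) =
      {x | f.eval x ≠ 0} := by
    ext x
    simp [Real.exp_ne_zero]
  rw [hsupport]
  refine IsOpen.measure_pos _ (isOpen_ne_fun f.continuous continuous_const) ?_
  exact (finite_setOfPred_isRoot hf).infinite_compl.nonempty

theorem innerS_self_pos {l1 l2 : ℝ} (hl1 : 0 ≤ l1) (hl2 : 0 ≤ l2) {f : ℝ[X]}
    (hf : f ≠ 0) : 0 < innerS l1 l2 f f := by
  have := innerF_self_pos hf
  rw [innerS, mul_assoc, mul_assoc]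
  have := mul_nonneg hl1 (mul_self_nonneg (f.eval 0))
  have := mul_nonneg hl2 (mul_self_nonneg ((derivative f).eval 0))
  linarith

theorem LinearMap.apply_eq_zero_of_degree_lt {R M : Type*} [Semiring R] [AddCommMonoid M]
    [Module R M] {L : R[X] →ₗ[R] M} {n : ℕ} (hL : ∀ m < n, L (X ^ m) = 0) {g : R[X]}
    (hg : g.degree < n) : L g = 0 := by
  classical
  have hspan : R[X]_n ≤ LinearMap.ker L := by
    rw [degreeLT_eq_span_X_pow, Submodule.span_le, Finset.coe_image, Set.image_subset_iff]
    exact fun m hm => hL m (Finset.mem_range.mp hm)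
  exact hspan (mem_degreeLT.mpr hg)

namespace LinearMap.BilinForm

variable {R : Type*} [CommRing R] [Nontrivial R] {B : LinearMap.BilinForm R R[X]}
  {P : ℕ → R[X]} {c : ℕ → R}

theorem apply_self_succ_eq_mul (hX : ∀ f g, B (X * f) g = B f (X * g))
    (hmonic : ∀ n, (P n).Monic) (hdeg : ∀ n, (P n).natDegree = n)
    (horth : ∀ n m, m < n → B (P n) (X ^ m) = 0)
    (hrec : ∀ n, 1 ≤ n → X * P n = P (n + 1) + C (c n) * P (n - 1)) (n : ℕ) :
    B (P (n + 1)) (P (n + 1)) = c (n + 1) * B (P n) (P n) := by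
  have hdegree : ∀ m, (P m).degree = m := fun m => by
    rw [degree_eq_natDegree (hmonic m).ne_zero, hdeg]
  have hdiff : (P (n + 1) - X * P n).degree < ↑(n + 1) := by
    rw [← hdegree]
    refine degree_sub_lt_left ?_ (hmonic _).ne_zero ?_
    · rw [X_mul, degree_mul_X, hdegree, hdegree]; rfl
    · rw [(hmonic _).leadingCoeff, (monic_X.mul (hmonic n)).leadingCoeff]
  have hlow : B (P (n + 2)) (P n) = 0 :=
    apply_eq_zero_of_degree_lt (horth _) (by rw [hdegree]; exact_mod_cast by omega)
  calc B (P (n + 1)) (P (n + 1))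
      = B (P (n + 1)) (X * P n) := by
        rw [← sub_eq_zero, ← map_sub, apply_eq_zero_of_degree_lt (horth _) hdiff]
    _ = B (X * P (n + 1)) (P n) := (hX _ _).symm
    _ = c (n + 1) * B (P n) (P n) := by
        rw [hrec (n + 1) (by omega), map_add, LinearMap.add_apply, hlow, ← smul_eq_C_mul,
          map_smul, LinearMap.smul_apply, smul_eq_mul, zero_add, Nat.add_sub_cancel]

end LinearMap.BilinForm

theorem sobolev_freud_ab_identity_general
    (l1 : ℝ) (hl1 : 0 ≤ l1)
    (P Q : ℕ → Polynomial ℝ) (k khat : ℕ → ℝ)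
    (hPmonic : ∀ n, (P n).Monic) (hPdeg : ∀ n, (P n).natDegree = n)
    (hPorth : ∀ n m : ℕ, m < n → innerF (P n) (X ^ m) = 0)
    (hQmonic : ∀ n, (Q n).Monic)
    (hk : ∀ n, k n = innerF (P n) (P n))
    (hkhat : ∀ n, khat n = innerS l1 0 (Q n) (Q n))
    (c : ℕ → ℝ)
    (hrec : ∀ n, 1 ≤ n → X * P n = P (n + 1) + C (c n) * P (n - 1))
    (a b : ℕ → ℝ) (ha : ∀ n, a n = k n / khat (n - 1))
    (hb : ∀ n, b n = khat n / k (n - 1)) :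
    ∀ n, 1 ≤ n → a (n + 1) * b n = c (n + 1) * c n := by
  have hk_succ (n : ℕ) : k (n + 1) = c (n + 1) * k n := by
    simpa only [hk, freudForm_apply] using
      freudForm.apply_self_succ_eq_mul freudForm_X_mul hPmonic hPdeg hPorth hrec n
  intro n hn
  obtain ⟨m, rfl⟩ : ∃ m, n = m + 1 := ⟨n - 1, by omega⟩
  have hkhat_ne : khat (m + 1) ≠ 0 := by
    rw [hkhat]; exact (innerS_self_pos hl1 le_rfl (hQmonic _).ne_zero).ne'
  have hk_ne : k m ≠ 0 := by
    rw [hk]; exact (innerF_self_pos (hPmonic m).ne_zero).ne'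
  rw [ha, hb, Nat.add_sub_cancel, Nat.add_sub_cancel, hk_succ (m + 1), hk_succ m]
  field_simp

/-- Case `λ₂ = 0`: with `a n = k n / k̂ (n-1)` and `b n = k̂ n / k (n-1)`,
`a_{n+1} b_n = c_{n+1} c_n` for all `n ≥ 1`. -/
theorem sobolev_freud_ab_identity
    (l1 : ℝ) (hl1 : 0 ≤ l1)
    (P Q : ℕ → Polynomial ℝ) (k khat : ℕ → ℝ)
    (hPmonic : ∀ n, (P n).Monic) (hPdeg : ∀ n, (P n).natDegree = n)
    (hPorth : ∀ n m : ℕ, m < n → innerF (P n) (X ^ m) = 0)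
    (hQmonic : ∀ n, (Q n).Monic) (hQdeg : ∀ n, (Q n).natDegree = n)
    (hQorth : ∀ n m : ℕ, m < n → innerS l1 0 (Q n) (X ^ m) = 0)
    (hk : ∀ n, k n = innerF (P n) (P n))
    (hkhat : ∀ n, khat n = innerS l1 0 (Q n) (Q n))
    (c : ℕ → ℝ) (hP0 : P 0 = 1) (hP1 : P 1 = X)
    (hrec : ∀ n, 1 ≤ n → X * P n = P (n + 1) + C (c n) * P (n - 1))
    (a b : ℕ → ℝ) (ha : ∀ n, a n = k n / khat (n - 1))
    (hb : ∀ n, b n = khat n / k (n - 1)) :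
    ∀ n, 1 ≤ n → a (n + 1) * b n = c (n + 1) * c n :=
  sobolev_freud_ab_identity_general l1 hl1 P Q k khat hPmonic hPdeg hPorth hQmonic hk hkhat c hrec a
    b ha hb
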